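/- Let A ∈ ℝ^{p×p} and Z ∈ ℝ^{n×n}, and define the spectral abscissa α(M) as the maximum real part of the eigenvalues of M. If α(-Z) < 0 (every eigenvalue of Z has positive real part), α(A) ≥ 0, and ρ is a real number with ρ < α(A)/α(-Z) (note α(A)/α(-Z) ≤ 0, so ρ < 0), then the matrix à = I_n ⊗ A + ρ (Z ⊗ I_p) satisfies α(Ã) < 0, i.e., à is Hurwitz. -/
import Mathlib


/-- The spectral abscissa of a real square matrix: the supremum of the real parts of its
complex eigenvalues. -/
noncomputable def specAbs {m : Type*} [Fintype m] [DecidableEq m] (M : Matrix m m ℝ) : ℝ :=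
  sSup (Complex.re '' spectrum ℂ (M.map Complex.ofReal))

section AuxStmt5
open Matrix Kronecker Module

/-- spectrum of sum of commuting endomorphisms -/
lemma aux_spectrum_add_of_commute {V : Type*} [AddCommGroup V] [Module ℂ V]
    [FiniteDimensional ℂ V] (f g : Module.End ℂ V) (h : Commute f g) {μ : ℂ}
    (hμ : μ ∈ spectrum ℂ (f + g)) :
    ∃ a ∈ spectrum ℂ f, ∃ b ∈ spectrum ℂ g, μ = a + b := by
  rw [← Module.End.hasEigenvalue_iff_mem_spectrum] at hμ
  set E := Module.End.eigenspace (f + g) μ with hE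
  have hmapsTo : ∀ x ∈ E, g x ∈ E := by
    intro x hx
    rw [Module.End.mem_eigenspace_iff] at hx ⊢
    have hcomm : (f + g) * g = g * (f + g) := (h.symm.add_right (Commute.refl g)).eq.symm
    calc (f + g) (g x) = ((f + g) * g) x := rfl
      _ = (g * (f + g)) x := by rw [hcomm]
      _ = g ((f + g) x) := rfl
      _ = g (μ • x) := by rw [hx]
      _ = μ • g x := map_smul g μ x
  haveI : Nontrivial E := Submodule.nontrivial_iff_ne_bot.mpr hμ
  set g' : Module.End ℂ E := g.restrict hmapsTo with hg'
  obtain ⟨c, hc⟩ := Module.End.exists_eigenvalue g'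
  obtain ⟨v, hv⟩ := hc.exists_hasEigenvector
  have hgv : g (v : V) = c • (v : V) := by
    have := Module.End.mem_eigenspace_iff.mp hv.1
    calc g (v : V) = (g' v : V) := (LinearMap.restrict_coe_apply g hmapsTo v).symm
      _ = ((c • v : E) : V) := by rw [this]
      _ = c • (v : V) := rfl
  have hfgv : (f + g) (v : V) = μ • (v : V) := Module.End.mem_eigenspace_iff.mp v.2
  have hfv : f (v : V) = (μ - c) • (v : V) := by
    have : f (v : V) + g (v : V) = μ • (v : V) := hfgv
    rw [hgv] at this
    rw [sub_smul, ← this]; abel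
  have hv0 : (v : V) ≠ 0 := fun hcon => hv.2 (Subtype.coe_injective (by simpa using hcon))
  refine ⟨μ - c, ?_, c, ?_, (sub_add_cancel μ c).symm⟩
  · exact Module.End.hasEigenvalue_iff_mem_spectrum.mp
      (Module.End.hasEigenvalue_of_hasEigenvector ⟨Module.End.mem_eigenspace_iff.mpr hfv, hv0⟩)
  · exact Module.End.hasEigenvalue_iff_mem_spectrum.mp
      (Module.End.hasEigenvalue_of_hasEigenvector ⟨Module.End.mem_eigenspace_iff.mpr hgv, hv0⟩)

lemma aux_matrix_spectrum_add {m : Type*} [Fintype m] [DecidableEq m]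
    (B C : Matrix m m ℂ) (h : Commute B C) {μ : ℂ} (hμ : μ ∈ spectrum ℂ (B + C)) :
    ∃ a ∈ spectrum ℂ B, ∃ b ∈ spectrum ℂ C, μ = a + b := by
  let e := Matrix.toLinAlgEquiv' (R := ℂ) (n := m)
  have hB := AlgEquiv.spectrum_eq e B
  have hC := AlgEquiv.spectrum_eq e C
  have hBC := AlgEquiv.spectrum_eq e (B + C)
  rw [← hBC, map_add] at hμ
  obtain ⟨a, ha, b, hb, hab⟩ := aux_spectrum_add_of_commute (e B) (e C) (h.map e) hμ
  exact ⟨a, hB ▸ ha, b, hC ▸ hb, hab⟩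

lemma aux_mem_spectrum_iff_det {m : Type*} [Fintype m] [DecidableEq m]
    (M : Matrix m m ℂ) (μ : ℂ) :
    μ ∈ spectrum ℂ M ↔ (μ • (1 : Matrix m m ℂ) - M).det = 0 := by
  rw [spectrum.mem_iff, Algebra.algebraMap_eq_smul_one,
    Matrix.isUnit_iff_isUnit_det, isUnit_iff_ne_zero, not_not]

lemma aux_spectrum_one_kronecker {n p : ℕ} (hn : 0 < n) (hp : 0 < p)
    (M : Matrix (Fin p) (Fin p) ℂ) :
    spectrum ℂ ((1 : Matrix (Fin n) (Fin n) ℂ) ⊗ₖ M) = spectrum ℂ M := by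
  haveI : Nonempty (Fin p) := Fin.pos_iff_nonempty.mp hp
  ext μ
  rw [aux_mem_spectrum_iff_det, aux_mem_spectrum_iff_det]
  have hk : μ • (1 : Matrix (Fin n × Fin p) (Fin n × Fin p) ℂ)
      - (1 : Matrix (Fin n) (Fin n) ℂ) ⊗ₖ M
      = (1 : Matrix (Fin n) (Fin n) ℂ) ⊗ₖ (μ • (1 : Matrix (Fin p) (Fin p) ℂ) - M) := by
    ext ⟨i, j⟩ ⟨k, l⟩
    simp [Matrix.sub_apply, Matrix.smul_apply, Matrix.one_apply, kronecker_apply, Prod.ext_iff]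
    by_cases hik : i = k <;> by_cases hjl : j = l <;> simp [hik, hjl]
  rw [hk, Matrix.det_kronecker]
  simp [pow_eq_zero_iff, hn.ne']

lemma aux_spectrum_kronecker_one {n p : ℕ} (hn : 0 < n) (hp : 0 < p)
    (M : Matrix (Fin n) (Fin n) ℂ) :
    spectrum ℂ (M ⊗ₖ (1 : Matrix (Fin p) (Fin p) ℂ)) = spectrum ℂ M := by
  haveI : Nonempty (Fin n) := Fin.pos_iff_nonempty.mp hn
  ext μ
  rw [aux_mem_spectrum_iff_det, aux_mem_spectrum_iff_det]
  have hk : μ • (1 : Matrix (Fin n × Fin p) (Fin n × Fin p) ℂ)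
      - M ⊗ₖ (1 : Matrix (Fin p) (Fin p) ℂ)
      = (μ • (1 : Matrix (Fin n) (Fin n) ℂ) - M) ⊗ₖ (1 : Matrix (Fin p) (Fin p) ℂ) := by
    ext ⟨i, j⟩ ⟨k, l⟩
    simp [Matrix.sub_apply, Matrix.smul_apply, Matrix.one_apply, kronecker_apply, Prod.ext_iff]
    by_cases hik : i = k <;> by_cases hjl : j = l <;> simp [hik, hjl]
  rw [hk, Matrix.det_kronecker]
  simp [pow_eq_zero_iff, hp.ne']

lemma aux_re_le_specAbs {m : Type*} [Fintype m] [DecidableEq m] (M : Matrix m m ℝ) {μ : ℂ}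
    (hμ : μ ∈ spectrum ℂ (M.map Complex.ofReal)) :
    μ.re ≤ sSup (Complex.re '' spectrum ℂ (M.map Complex.ofReal)) := by
  apply le_csSup
  · exact (((Matrix.finite_spectrum _).image _)).bddAbove
  · exact ⟨μ, hμ, rfl⟩

end AuxStmt5

open Matrix Kronecker in
theorem stmt_5 (p n : ℕ) (hp : 0 < p) (hn : 0 < n)
    (A : Matrix (Fin p) (Fin p) ℝ) (Z : Matrix (Fin n) (Fin n) ℝ) (ρ : ℝ)
    (hZ : specAbs (-Z) < 0) (hA : 0 ≤ specAbs A)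
    (hρ : ρ < specAbs A / specAbs (-Z)) :
    specAbs ((1 : Matrix (Fin n) (Fin n) ℝ) ⊗ₖ A
      + ρ • (Z ⊗ₖ (1 : Matrix (Fin p) (Fin p) ℝ))) < 0 := by
  haveI : Nonempty (Fin n) := Fin.pos_iff_nonempty.mp hn
  haveI : Nonempty (Fin p) := Fin.pos_iff_nonempty.mp hp
  have hρ0 : ρ < 0 := lt_of_lt_of_le hρ (div_nonpos_of_nonneg_of_nonpos hA hZ.le)
  set M := (1 : Matrix (Fin n) (Fin n) ℝ) ⊗ₖ A + ρ • (Z ⊗ₖ (1 : Matrix (Fin p) (Fin p) ℝ))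
    with hM
  have hmap : M.map Complex.ofReal
      = (1 : Matrix (Fin n) (Fin n) ℂ) ⊗ₖ (A.map Complex.ofReal)
        + ((ρ • Z).map Complex.ofReal) ⊗ₖ (1 : Matrix (Fin p) (Fin p) ℂ) := by
    ext ⟨i, j⟩ ⟨k, l⟩
    simp only [hM, Matrix.map_apply, Matrix.add_apply, Matrix.smul_apply, kronecker_apply,
      Matrix.one_apply, smul_eq_mul]
    by_cases hik : i = k <;> by_cases hjl : j = l <;> simp [hik, hjl] <;> push_cast <;> ring
  have key : ∀ μ ∈ spectrum ℂ (M.map Complex.ofReal), μ.re < 0 := by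
    intro μ hμ
    rw [hmap] at hμ
    have hcomm : Commute ((1 : Matrix (Fin n) (Fin n) ℂ) ⊗ₖ (A.map Complex.ofReal))
        (((ρ • Z).map Complex.ofReal) ⊗ₖ (1 : Matrix (Fin p) (Fin p) ℂ)) := by
      show _ * _ = _ * _
      rw [← Matrix.mul_kronecker_mul, ← Matrix.mul_kronecker_mul, one_mul, mul_one, one_mul,
        mul_one]
    obtain ⟨a, ha, b, hb, rfl⟩ := aux_matrix_spectrum_add _ _ hcomm hμ
    rw [aux_spectrum_one_kronecker hn hp] at ha
    rw [aux_spectrum_kronecker_one hn hp] at hb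
    have hρC : ((ρ : ℂ)) ≠ 0 := by exact_mod_cast hρ0.ne
    have hsm : (ρ • Z).map Complex.ofReal
        = (Units.mk0 (ρ : ℂ) hρC) • (Z.map Complex.ofReal) := by
      ext i k
      simp [Matrix.map_apply, Units.smul_def]
    rw [hsm, spectrum.unit_smul_eq_smul] at hb
    obtain ⟨c, hc, rfl⟩ := hb
    have hare : a.re ≤ specAbs A := aux_re_le_specAbs A ha
    have hnegc : (-c) ∈ spectrum ℂ ((-Z).map Complex.ofReal) := by
      have hneg : (-Z).map Complex.ofReal = -(Z.map Complex.ofReal) := by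
        ext i k; simp [Matrix.map_apply]
      rw [hneg, ← spectrum.neg_eq]
      exact Set.neg_mem_neg.mpr hc
    have hcre : (-c).re ≤ specAbs (-Z) := aux_re_le_specAbs (-Z) hnegc
    rw [Complex.neg_re] at hcre
    have hprod : specAbs A < ρ * specAbs (-Z) := (lt_div_iff_of_neg hZ).mp hρ
    have hmul : ρ * c.re ≤ ρ * (-specAbs (-Z)) :=
      mul_le_mul_of_nonpos_left (by linarith) hρ0.le
    have hre : (a + (ρ : ℂ) * c).re = a.re + ρ * c.re := by
      simp [Complex.add_re, Complex.mul_re]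
    have : a + (fun x => ((Units.mk0 (ρ : ℂ) hρC : ℂˣ) : ℂ) • x) c = a + (ρ : ℂ) * c := rfl
    rw [this, hre]
    linarith
  have hne : (spectrum ℂ (M.map Complex.ofReal)).Nonempty :=
    spectrum.nonempty_of_isAlgClosed_of_finiteDimensional ℂ _
  have hfin := (Matrix.finite_spectrum (M.map Complex.ofReal)).image Complex.re
  obtain ⟨μ, hμ, heq⟩ := Set.Nonempty.csSup_mem (hne.image Complex.re) hfin
  show sSup (Complex.re '' spectrum ℂ (M.map Complex.ofReal)) < 0
  rw [← heq]
  exact key μ hμ
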